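/- arXiv:1903.11184 — 2 statements merged into one kernel-verified Lean document; each statement's English description precedes it below -/
import Mathlib

section
/- Let n ≥ 1 and let f : ℝⁿ → ℝ be differentiable with gradient ∇f Lipschitz continuous with constant L ≥ 0. Fix x̄ ∈ ℝⁿ and ε > 0, and let Y be the coordinate simplex [x̄, x̄ + εe₁, …, x̄ + εe_n], where e_i is the i-th standard basis vector. Then the simplex gradient of f over Y is the vector g^ε with components (g^ε)_i = (f(x̄ + εe_i) − f(x̄))/ε, and it satisfies ‖g^ε − ∇f(x̄)‖ ≤ (√n · L / 2) · ε. (This combines Remark 3.1 of the paper, where M̂ = I and ‖M̂⁻¹‖ = 1 for the coordinate simplex, with the simplex-gradient error bound.) -/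
/-!
Along the segment from `x` to `x + v` the derivative of `t ↦ f (x + t v) - t Df(x) v` is at most
`L t ‖v‖²`, so the first-order Taylor remainder of `f` is at most `L ‖v‖² / 2`. Taking `v = ε eᵢ`
bounds every coordinate of `g^ε - ∇f(x̄)` by `L ε / 2`, and a vector of `ℝⁿ` whose coordinates
are bounded by `c` has Euclidean norm at most `√n c`.
-/

open scoped RealInnerProductSpace

section LipschitzDerivative

variable {E : Type*} [NormedAddCommGroup E] [NormedSpace ℝ E] {f : E → ℝ} {L : ℝ}

theorem abs_sub_sub_fderiv_apply_le_of_lipschitz_fderiv (hf : Differentiable ℝ f)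
    (hlip : ∀ x y, ‖fderiv ℝ f x - fderiv ℝ f y‖ ≤ L * ‖x - y‖) (x v : E) :
    |f (x + v) - f x - fderiv ℝ f x v| ≤ L / 2 * ‖v‖ ^ 2 := by
  set g : ℝ → ℝ := fun t => f (x + t • v) - f x - t * fderiv ℝ f x v
  have hg : ∀ t, HasDerivAt g ((fderiv ℝ f (x + t • v) - fderiv ℝ f x) v) t := by
    intro t
    have hline : HasDerivAt (fun t : ℝ => x + t • v) v t := by
      simpa using ((hasDerivAt_id t).smul_const v).const_add x
    have hcomp := (((hf _).hasFDerivAt.comp_hasDerivAt t hline).sub_const (f x)).sub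
      ((hasDerivAt_id t).mul_const (fderiv ℝ f x v))
    rwa [one_mul, ← sub_apply] at hcomp
  have hg_le : ∀ t ∈ Set.Ico (0 : ℝ) 1,
      ‖(fderiv ℝ f (x + t • v) - fderiv ℝ f x) v‖ ≤ L * ‖v‖ ^ 2 * t := fun t ht =>
    calc ‖(fderiv ℝ f (x + t • v) - fderiv ℝ f x) v‖
        ≤ ‖fderiv ℝ f (x + t • v) - fderiv ℝ f x‖ * ‖v‖ := ContinuousLinearMap.le_opNorm _ _
      _ ≤ L * ‖t • v‖ * ‖v‖ := by
          gcongr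
          simpa using hlip (x + t • v) x
      _ = L * ‖v‖ ^ 2 * t := by rw [norm_smul, Real.norm_of_nonneg ht.1]; ring
  have hB : ∀ t, HasDerivAt (fun t : ℝ => L * ‖v‖ ^ 2 * (t ^ 2 / 2)) (L * ‖v‖ ^ 2 * t) t :=
    fun t => by simpa using ((hasDerivAt_pow 2 t).div_const 2).const_mul (L * ‖v‖ ^ 2)
  have hremainder := image_norm_le_of_norm_deriv_right_le_deriv_boundary (a := 0) (b := 1)
    (fun t _ => (hg t).continuousAt.continuousWithinAt) (fun t _ => (hg t).hasDerivWithinAt)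
    (by simp [g]) hB hg_le (Set.right_mem_Icc.2 zero_le_one)
  convert hremainder using 1
  · simp [g]
  · ring

end LipschitzDerivative

section LipschitzGradient

variable {F : Type*} [NormedAddCommGroup F] [InnerProductSpace ℝ F] [CompleteSpace F]
  {f : F → ℝ} {L : ℝ}

theorem abs_sub_sub_inner_gradient_le_of_lipschitz_gradient (hf : Differentiable ℝ f)
    (hlip : ∀ x y, ‖gradient f x - gradient f y‖ ≤ L * ‖x - y‖) (x v : F) :
    |f (x + v) - f x - ⟪gradient f x, v⟫| ≤ L / 2 * ‖v‖ ^ 2 := by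
  have hlip' : ∀ x y, ‖fderiv ℝ f x - fderiv ℝ f y‖ ≤ L * ‖x - y‖ := fun x y => by
    simpa [← toDual_gradient, ← map_sub] using hlip x y
  simpa [inner_gradient_left] using abs_sub_sub_fderiv_apply_le_of_lipschitz_fderiv hf hlip' x v

end LipschitzGradient

theorem EuclideanSpace.norm_le_sqrt_card_mul {ι : Type*} [Fintype ι] {x : EuclideanSpace ℝ ι}
    {c : ℝ} (hx : ∀ i, |x i| ≤ c) : ‖x‖ ≤ √(Fintype.card ι) * c := by
  cases isEmpty_or_nonempty ι with
  | inl _ => simp [Subsingleton.elim x 0]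
  | inr hι =>
    have hc : 0 ≤ c := (abs_nonneg _).trans (hx hι.some)
    calc ‖x‖ = √(∑ i, |x i| ^ 2) := by simp [EuclideanSpace.norm_eq]
      _ ≤ √(∑ _ : ι, c ^ 2) := by gcongr with i; exact hx i
      _ = √(Fintype.card ι) * c := by
          simp [Real.sqrt_mul, Real.sqrt_sq hc]

theorem abs_forward_difference_quotient_sub_gradient_le {ι : Type*} [Fintype ι] [DecidableEq ι]
    {f : EuclideanSpace ℝ ι → ℝ} {L : ℝ} (hf : Differentiable ℝ f)
    (hlip : ∀ x y, ‖gradient f x - gradient f y‖ ≤ L * ‖x - y‖)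
    (x : EuclideanSpace ℝ ι) {ε : ℝ} (hε : 0 < ε) (i : ι) :
    |(f (x + ε • EuclideanSpace.single i 1) - f x) / ε - gradient f x i| ≤ L / 2 * ε := by
  have h := abs_sub_sub_inner_gradient_le_of_lipschitz_gradient hf hlip x
    (ε • EuclideanSpace.single i 1)
  rw [real_inner_smul_right, EuclideanSpace.inner_single_right, norm_smul,
    PiLp.norm_single, Real.norm_of_nonneg hε.le] at h
  have hq : (f (x + ε • EuclideanSpace.single i 1) - f x) / ε - gradient f x i
      = (f (x + ε • EuclideanSpace.single i 1) - f x - ε * gradient f x i) / ε := by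
    field_simp
  rw [hq, abs_div, abs_of_pos hε, div_le_iff₀ hε]
  simpa [sq, mul_assoc] using h

theorem coordinate_simplex_gradient_error_bound_general
    (n : ℕ) (f : EuclideanSpace ℝ (Fin n) → ℝ)
    (hf : Differentiable ℝ f) (L : ℝ)
    (hlip : ∀ x y : EuclideanSpace ℝ (Fin n),
      ‖gradient f x - gradient f y‖ ≤ L * ‖x - y‖)
    (xbar : EuclideanSpace ℝ (Fin n)) (ε : ℝ) (hε : 0 < ε)
    (gε : EuclideanSpace ℝ (Fin n))
    (hgε : ∀ i, gε i = (f (xbar + ε • EuclideanSpace.single i (1 : ℝ)) - f xbar) / ε) :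
    ‖gε - gradient f xbar‖ ≤ (Real.sqrt n * L / 2) * ε := by
  have hcoord : ∀ i, |(gε - gradient f xbar) i| ≤ L / 2 * ε := fun i => by
    simpa [hgε i] using abs_forward_difference_quotient_sub_gradient_le hf hlip xbar hε i
  calc ‖gε - gradient f xbar‖ ≤ √(Fintype.card (Fin n)) * (L / 2 * ε) :=
        EuclideanSpace.norm_le_sqrt_card_mul hcoord
    _ = (Real.sqrt n * L / 2) * ε := by rw [Fintype.card_fin]; ring

/-- Remark 3.1 combined with the simplex-gradient error bound: the simplex gradient over
the coordinate simplex `[x̄, x̄ + εe₁, …, x̄ + εe_n]` has components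
`(f(x̄ + εeᵢ) - f(x̄))/ε` and satisfies `‖g^ε - ∇f(x̄)‖ ≤ (√n · L / 2) · ε`. -/
theorem coordinate_simplex_gradient_error_bound
    (n : ℕ) (hn : 1 ≤ n) (f : EuclideanSpace ℝ (Fin n) → ℝ)
    (hf : Differentiable ℝ f) (L : ℝ) (hL : 0 ≤ L)
    (hlip : ∀ x y : EuclideanSpace ℝ (Fin n),
      ‖gradient f x - gradient f y‖ ≤ L * ‖x - y‖)
    (xbar : EuclideanSpace ℝ (Fin n)) (ε : ℝ) (hε : 0 < ε)
    (gε : EuclideanSpace ℝ (Fin n))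
    (hgε : ∀ i, gε i = (f (xbar + ε • EuclideanSpace.single i (1 : ℝ)) - f xbar) / ε) :
    ‖gε - gradient f xbar‖ ≤ (Real.sqrt n * L / 2) * ε :=
  coordinate_simplex_gradient_error_bound_general n f hf L hlip xbar ε hε gε hgε
end

section
/- Let n ≥ 1, let A be a nonempty finite index set, and for each i ∈ A let f_i : ℝⁿ → ℝ be differentiable with gradient ∇f_i Lipschitz continuous with constant L ≥ 0. Fix x̄ ∈ ℝⁿ and ε > 0, and for each i ∈ A let g_i^ε ∈ ℝⁿ be the simplex gradient of f_i over the coordinate simplex [x̄, x̄ + εe₁, …, x̄ + εe_n], i.e. (g_i^ε)_j = (f_i(x̄ + εe_j) − f_i(x̄))/ε. Let λ_i ≥ 0 for i ∈ A with Σ_{i∈A} λ_i = 1. Then ‖Σ_{i∈A} λ_i g_i^ε − Σ_{i∈A} λ_i ∇f_i(x̄)‖ ≤ (√n · L / 2) · ε. (This is the quantitative content of Theorem 3.3(i) of the paper: the convex combination of simplex gradients of the active subfunctions approximates the corresponding convex combination of exact gradients, a subgradient of the max-function, with error proportional to ε.) -/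
/-!
Along the segment `t ↦ x + t • v` the defect `g (x + t • v) - g x - t ⟪∇g x, v⟫` has derivative
bounded by `L t ‖v‖²`, so it is at most `L/2 ‖v‖²` at `t = 1`. Dividing by `ε` bounds each
coordinate of the forward-difference simplex gradient by `L ε / 2` away from the gradient, hence
its Euclidean distance by `√n L ε / 2`, and this bound survives convex combinations because
closed balls are convex.
-/

open scoped RealInnerProductSpace

section Descent

variable {F : Type*} [NormedAddCommGroup F] [InnerProductSpace ℝ F] [CompleteSpace F]
  {g : F → ℝ} {L : ℝ}

theorem abs_sub_sub_inner_gradient_le (hg : Differentiable ℝ g)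
    (hlip : ∀ x y : F, ‖gradient g x - gradient g y‖ ≤ L * ‖x - y‖) (x v : F) :
    |g (x + v) - g x - ⟪gradient g x, v⟫| ≤ L / 2 * ‖v‖ ^ 2 := by
  set φ : ℝ → ℝ := fun t => g (x + t • v) - g x - t * ⟪gradient g x, v⟫
  have hφ : ∀ t : ℝ, HasDerivAt φ (⟪gradient g (x + t • v) - gradient g x, v⟫) t := by
    intro t
    have hline : HasDerivAt (fun t : ℝ => x + t • v) v t := by
      simpa using ((hasDerivAt_id t).smul_const v).const_add x
    have hcomp : HasDerivAt (fun t : ℝ => g (x + t • v)) ⟪gradient g (x + t • v), v⟫ t := by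
      simpa [InnerProductSpace.toDual_apply_apply, Function.comp_def] using
        (hg (x + t • v)).hasGradientAt.hasFDerivAt.comp_hasDerivAt t hline
    rw [inner_sub_left]
    exact (hcomp.sub_const (g x)).sub (hasDerivAt_mul_const ⟪gradient g x, v⟫)
  have hbound : ∀ t : ℝ,
      HasDerivAt (fun t : ℝ => L / 2 * ‖v‖ ^ 2 * t ^ 2) (L * ‖v‖ ^ 2 * t) t :=
    fun t => ((hasDerivAt_pow 2 t).const_mul (L / 2 * ‖v‖ ^ 2)).congr_deriv (by ring)
  have hderiv : ∀ t ∈ Set.Ico (0 : ℝ) 1,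
      ‖⟪gradient g (x + t • v) - gradient g x, v⟫‖ ≤ L * ‖v‖ ^ 2 * t := by
    intro t ht
    calc ‖⟪gradient g (x + t • v) - gradient g x, v⟫‖
        ≤ ‖gradient g (x + t • v) - gradient g x‖ * ‖v‖ := norm_inner_le_norm _ _
      _ ≤ L * ‖t • v‖ * ‖v‖ := by
          gcongr
          simpa using hlip (x + t • v) x
      _ = L * ‖v‖ ^ 2 * t := by rw [norm_smul, Real.norm_of_nonneg ht.1]; ring
  have hend := image_norm_le_of_norm_deriv_right_le_deriv_boundary
    (fun t _ => (hφ t).continuousAt.continuousWithinAt) (fun t _ => (hφ t).hasDerivWithinAt)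
    (by simp [φ]) hbound hderiv (Set.right_mem_Icc.2 zero_le_one)
  simpa [φ] using hend

theorem abs_div_sub_inner_gradient_le (hg : Differentiable ℝ g)
    (hlip : ∀ x y : F, ‖gradient g x - gradient g y‖ ≤ L * ‖x - y‖) (x v : F) {ε : ℝ}
    (hε : 0 < ε) :
    |(g (x + ε • v) - g x) / ε - ⟪gradient g x, v⟫| ≤ L / 2 * ‖v‖ ^ 2 * ε := by
  have hdescent := abs_sub_sub_inner_gradient_le hg hlip x (ε • v)
  rw [inner_smul_right, norm_smul, Real.norm_of_nonneg hε.le] at hdescent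
  rw [div_sub' hε.ne', abs_div, abs_of_pos hε, div_le_iff₀ hε]
  linarith

end Descent

theorem EuclideanSpace.norm_le_sqrt_card_mul_of_abs_le {ι : Type*} [Fintype ι]
    {x : EuclideanSpace ℝ ι} {M : ℝ} (h : ∀ j, |x j| ≤ M) :
    ‖x‖ ≤ √(Fintype.card ι) * M := by
  rcases isEmpty_or_nonempty ι with _ | ⟨⟨j₀⟩⟩
  · simp [Subsingleton.elim x 0]
  have hM : 0 ≤ M := (abs_nonneg _).trans (h j₀)
  rw [EuclideanSpace.norm_eq, ← Real.sqrt_sq hM, ← Real.sqrt_mul (Nat.cast_nonneg _)]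
  gcongr
  calc ∑ j, ‖x j‖ ^ 2 ≤ ∑ _j : ι, M ^ 2 := by gcongr with j; exact h j
    _ = Fintype.card ι * M ^ 2 := by simp

section SimplexGradient

variable {ι : Type*} [Fintype ι] [DecidableEq ι]

noncomputable def coordSimplexGradient (g : EuclideanSpace ℝ ι → ℝ) (x : EuclideanSpace ℝ ι)
    (ε : ℝ) : EuclideanSpace ℝ ι :=
  WithLp.toLp 2 fun j => (g (x + ε • EuclideanSpace.single j 1) - g x) / ε

theorem norm_coordSimplexGradient_sub_gradient_le {g : EuclideanSpace ℝ ι → ℝ} {L : ℝ}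
    (hg : Differentiable ℝ g)
    (hlip : ∀ x y, ‖gradient g x - gradient g y‖ ≤ L * ‖x - y‖) (x : EuclideanSpace ℝ ι)
    {ε : ℝ} (hε : 0 < ε) :
    ‖coordSimplexGradient g x ε - gradient g x‖ ≤ √(Fintype.card ι) * (L / 2 * ε) := by
  refine EuclideanSpace.norm_le_sqrt_card_mul_of_abs_le fun j => ?_
  have := abs_div_sub_inner_gradient_le hg hlip x (EuclideanSpace.single j 1) hε
  simpa only [coordSimplexGradient, PiLp.sub_apply, EuclideanSpace.inner_single_right, one_mul,
    conj_trivial, PiLp.norm_single, norm_one, one_pow, mul_one] using this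

end SimplexGradient

theorem convex_combination_simplex_gradient_error_bound_general
    {ι : Type*} (n : ℕ) (A : Finset ι)
    (f : ι → EuclideanSpace ℝ (Fin n) → ℝ) (L : ℝ)
    (hf : ∀ i ∈ A, Differentiable ℝ (f i))
    (hlip : ∀ i ∈ A, ∀ x y : EuclideanSpace ℝ (Fin n),
      ‖gradient (f i) x - gradient (f i) y‖ ≤ L * ‖x - y‖)
    (xbar : EuclideanSpace ℝ (Fin n)) (ε : ℝ) (hε : 0 < ε)
    (gε : ι → EuclideanSpace ℝ (Fin n))
    (hgε : ∀ i ∈ A, ∀ j, gε i j =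
      (f i (xbar + ε • EuclideanSpace.single j (1 : ℝ)) - f i xbar) / ε)
    (lam : ι → ℝ) (hlam : ∀ i ∈ A, 0 ≤ lam i) (hsum : ∑ i ∈ A, lam i = 1) :
    ‖(∑ i ∈ A, lam i • gε i) - ∑ i ∈ A, lam i • gradient (f i) xbar‖ ≤
      (Real.sqrt n * L / 2) * ε := by
  have hsimplex : ∀ i ∈ A, gε i = coordSimplexGradient (f i) xbar ε := fun i hi => by
    ext j
    exact hgε i hi j
  rw [← Finset.sum_sub_distrib, ← mem_closedBall_zero_iff]
  simp only [← smul_sub]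
  refine (convex_closedBall 0 _).sum_mem hlam hsum fun i hi => ?_
  rw [mem_closedBall_zero_iff, hsimplex i hi]
  simpa [mul_assoc, mul_div_assoc] using
    norm_coordSimplexGradient_sub_gradient_le (hf i hi) (hlip i hi) xbar hε

/-- Theorem 3.3(i), quantitative form: a convex combination of coordinate-simplex
gradients of the active subfunctions approximates the corresponding convex combination
of exact gradients with error at most `(√n · L / 2) · ε`. -/
theorem convex_combination_simplex_gradient_error_bound
    {ι : Type*} (n : ℕ) (hn : 1 ≤ n) (A : Finset ι) (hA : A.Nonempty)
    (f : ι → EuclideanSpace ℝ (Fin n) → ℝ) (L : ℝ) (hL : 0 ≤ L)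
    (hf : ∀ i ∈ A, Differentiable ℝ (f i))
    (hlip : ∀ i ∈ A, ∀ x y : EuclideanSpace ℝ (Fin n),
      ‖gradient (f i) x - gradient (f i) y‖ ≤ L * ‖x - y‖)
    (xbar : EuclideanSpace ℝ (Fin n)) (ε : ℝ) (hε : 0 < ε)
    (gε : ι → EuclideanSpace ℝ (Fin n))
    (hgε : ∀ i ∈ A, ∀ j, gε i j =
      (f i (xbar + ε • EuclideanSpace.single j (1 : ℝ)) - f i xbar) / ε)
    (lam : ι → ℝ) (hlam : ∀ i ∈ A, 0 ≤ lam i) (hsum : ∑ i ∈ A, lam i = 1) :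
    ‖(∑ i ∈ A, lam i • gε i) - ∑ i ∈ A, lam i • gradient (f i) xbar‖ ≤
      (Real.sqrt n * L / 2) * ε :=
  convex_combination_simplex_gradient_error_bound_general n A f L hf hlip xbar ε hε gε hgε lam hlam
    hsum
end
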